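/- Let L ≥ 1 be a positive integer, let I, T, N be positive reals, let σ_{y1},…,σ_{yL} be positive reals with Λhalf = diag(σ_{y1},…,σ_{yL}), and let λ3, λ4, τ3, τ4, C1, C2 be reals satisfying λ3 − τ3 ≠ 0, λ4 − τ4 ≠ 0, λ3 + (L−1)τ3 ≠ 0, λ4 + (L−1)τ4 ≠ 0, C1(λ4 − τ4) − C2(λ3 − τ3) ≠ 0, and C1(λ4 + (L−1)τ4) − C2(λ3 + (L−1)τ3) ≠ 0. Then the L×L matrix Ω = (I·T/N)·Λhalf·[C1·((λ3 − τ3)·I_L + τ3·J_L)^{-1} − C2·((λ4 − τ4)·I_L + τ4·J_L)^{-1}]^{-1}·Λhalf is well defined, and for every l ∈ {1,…,L} its l-th diagonal entry equals ((I·T/N)·σ_{yl}² / [C1(λ4 − τ4) − C2(λ3 − τ3)]) · ([C1·λ3·(λ4 − τ4)·(λ4 + (L−1)τ4) − C2·λ4·(λ3 − τ3)·(λ3 + (L−1)τ3)] / [C1(λ4 + (L−1)τ4) − C2(λ3 + (L−1)τ3)]). -/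

import Mathlib

/-!
Since `J * J = L • J` for the all-ones matrix `J`, the compound-symmetric matrices `a • 1 + b • J`
form a commutative algebra: `a • 1 + b • J` is invertible as soon as its eigenvalues `a` and
`a + L * b` are nonzero, with inverse `a⁻¹ • 1 - b / (a * (a + L * b)) • J`. So
`C1 • M₃⁻¹ - C2 • M₄⁻¹` and its inverse are again compound symmetric, the eigenvalues of the
combination are the same combinations of the eigenvalues of `M₃⁻¹` and `M₄⁻¹`, and the diagonal
entry `a + b` of the final matrix is a rational function of these eigenvalues.
-/

open Matrix

def allOnes (u : ℕ) : Matrix (Fin u) (Fin u) ℝ := Matrix.of fun _ _ => 1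

lemma diagonal_mul_mul_diagonal_apply_self {n R : Type*} [Fintype n] [DecidableEq n]
    [CommSemiring R] (d : n → R) (M : Matrix n n R) (i : n) :
    (diagonal d * M * diagonal d) i i = d i ^ 2 * M i i := by
  rw [mul_diagonal, diagonal_mul]
  ring

section CompoundSymmetric

variable (L : ℕ)

noncomputable def compoundSymmetric (a b : ℝ) : Matrix (Fin L) (Fin L) ℝ :=
  a • (1 : Matrix (Fin L) (Fin L) ℝ) + b • allOnes L

lemma allOnes_mul_allOnes : allOnes L * allOnes L = (L : ℝ) • allOnes L := by
  ext i j
  simp [allOnes, Matrix.mul_apply]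

lemma compoundSymmetric_one_zero : compoundSymmetric L 1 0 = 1 := by
  simp [compoundSymmetric]

lemma compoundSymmetric_apply_self (a b : ℝ) (l : Fin L) : compoundSymmetric L a b l l = a + b := by
  simp [compoundSymmetric, allOnes]

lemma smul_compoundSymmetric (c a b : ℝ) :
    c • compoundSymmetric L a b = compoundSymmetric L (c * a) (c * b) := by
  simp [compoundSymmetric, smul_add, smul_smul]

lemma compoundSymmetric_sub_compoundSymmetric (a b c d : ℝ) :
    compoundSymmetric L a b - compoundSymmetric L c d = compoundSymmetric L (a - c) (b - d) := by
  simp only [compoundSymmetric, sub_smul]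
  module

lemma compoundSymmetric_mul_compoundSymmetric (a b c d : ℝ) :
    compoundSymmetric L a b * compoundSymmetric L c d =
      compoundSymmetric L (a * c) (a * d + b * c + L * b * d) := by
  simp only [compoundSymmetric, add_mul, mul_add, Matrix.smul_mul, Matrix.mul_smul, smul_smul,
    one_mul, mul_one, allOnes_mul_allOnes]
  module

variable {L}

lemma compoundSymmetric_mul_eq_one {a b : ℝ} (ha : a ≠ 0) (hs : a + L * b ≠ 0) :
    compoundSymmetric L a b * compoundSymmetric L a⁻¹ (-b / (a * (a + L * b))) = 1 := by
  rw [compoundSymmetric_mul_compoundSymmetric, ← compoundSymmetric_one_zero L]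
  congr 1
  · exact mul_inv_cancel₀ ha
  · grind

lemma isUnit_compoundSymmetric {a b : ℝ} (ha : a ≠ 0) (hs : a + L * b ≠ 0) :
    IsUnit (compoundSymmetric L a b) :=
  (isUnit_iff_isUnit_det _).mpr <|
    isUnit_det_of_right_inverse (compoundSymmetric_mul_eq_one ha hs)

lemma inv_compoundSymmetric {a b : ℝ} (ha : a ≠ 0) (hs : a + L * b ≠ 0) :
    (compoundSymmetric L a b)⁻¹ = compoundSymmetric L a⁻¹ (-b / (a * (a + L * b))) :=
  inv_eq_right_inv (compoundSymmetric_mul_eq_one ha hs)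

lemma inv_compoundSymmetric_apply_self {a b : ℝ} (ha : a ≠ 0) (hs : a + L * b ≠ 0) (l : Fin L) :
    (compoundSymmetric L a b)⁻¹ l l = (a + (L - 1) * b) / (a * (a + L * b)) := by
  rw [inv_compoundSymmetric ha hs, compoundSymmetric_apply_self]
  grind

lemma smul_inv_sub_smul_inv_compoundSymmetric (C₁ C₂ : ℝ) {a b c d : ℝ} (ha : a ≠ 0)
    (hab : a + L * b ≠ 0) (hc : c ≠ 0) (hcd : c + L * d ≠ 0) :
    C₁ • (compoundSymmetric L a b)⁻¹ - C₂ • (compoundSymmetric L c d)⁻¹ =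
      compoundSymmetric L (C₁ * a⁻¹ - C₂ * c⁻¹)
        (C₁ * (-b / (a * (a + L * b))) - C₂ * (-d / (c * (c + L * d)))) := by
  rw [inv_compoundSymmetric ha hab, inv_compoundSymmetric hc hcd, smul_compoundSymmetric,
    smul_compoundSymmetric, compoundSymmetric_sub_compoundSymmetric]

lemma isUnit_and_inv_apply_self_smul_inv_sub_smul_inv_compoundSymmetric {C₁ C₂ a b c d : ℝ}
    (ha : a ≠ 0) (hab : a + L * b ≠ 0) (hc : c ≠ 0) (hcd : c + L * d ≠ 0) (h₀ : C₁ * c - C₂ * a ≠ 0)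
    (h₁ : C₁ * (c + L * d) - C₂ * (a + L * b) ≠ 0) :
    IsUnit (C₁ • (compoundSymmetric L a b)⁻¹ - C₂ • (compoundSymmetric L c d)⁻¹) ∧
      ∀ l, (C₁ • (compoundSymmetric L a b)⁻¹ - C₂ • (compoundSymmetric L c d)⁻¹)⁻¹ l l =
        (C₁ * (a + b) * c * (c + L * d) - C₂ * (c + d) * a * (a + L * b)) /
          ((C₁ * c - C₂ * a) * (C₁ * (c + L * d) - C₂ * (a + L * b))) := by
  rw [smul_inv_sub_smul_inv_compoundSymmetric C₁ C₂ ha hab hc hcd]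
  set A := C₁ * a⁻¹ - C₂ * c⁻¹
  set B := C₁ * (-b / (a * (a + L * b))) - C₂ * (-d / (c * (c + L * d)))
  have hA : A = (C₁ * c - C₂ * a) / (a * c) := by
    simp only [A]
    field_simp
  have hAB : A + L * B = (C₁ * (c + L * d) - C₂ * (a + L * b)) / ((a + L * b) * (c + L * d)) := by
    simp only [A, B]
    field_simp
    ring
  have hA₀ : A ≠ 0 := hA ▸ div_ne_zero h₀ (mul_ne_zero ha hc)
  have hAB₀ : A + L * B ≠ 0 := hAB ▸ div_ne_zero h₁ (mul_ne_zero hab hcd)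
  refine ⟨isUnit_compoundSymmetric hA₀ hAB₀, fun l => ?_⟩
  rw [inv_compoundSymmetric_apply_self hA₀ hAB₀, show A + (L - 1) * B = A + L * B - B by ring, hAB,
    hA]
  simp only [B]
  field_simp
  ring

end CompoundSymmetric

theorem diag_entry_common_icc_closed_cohort_general
    (L : ℕ) (I T N : ℝ)
    (σ : Fin L → ℝ)
    (lam3 lam4 tau3 tau4 C1 C2 : ℝ)
    (h1 : lam3 - tau3 ≠ 0) (h2 : lam4 - tau4 ≠ 0)
    (h3 : lam3 + ((L : ℝ) - 1) * tau3 ≠ 0) (h4 : lam4 + ((L : ℝ) - 1) * tau4 ≠ 0)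
    (h5 : C1 * (lam4 - tau4) - C2 * (lam3 - tau3) ≠ 0)
    (h6 : C1 * (lam4 + ((L : ℝ) - 1) * tau4) - C2 * (lam3 + ((L : ℝ) - 1) * tau3) ≠ 0) :
    IsUnit ((lam3 - tau3) • (1 : Matrix (Fin L) (Fin L) ℝ) + tau3 • allOnes L) ∧
    IsUnit ((lam4 - tau4) • (1 : Matrix (Fin L) (Fin L) ℝ) + tau4 • allOnes L) ∧
    IsUnit (C1 • ((lam3 - tau3) • (1 : Matrix (Fin L) (Fin L) ℝ) + tau3 • allOnes L)⁻¹ -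
            C2 • ((lam4 - tau4) • (1 : Matrix (Fin L) (Fin L) ℝ) + tau4 • allOnes L)⁻¹) ∧
    ∀ l : Fin L,
      ((I * T / N) •
        (Matrix.diagonal σ *
          (C1 • ((lam3 - tau3) • (1 : Matrix (Fin L) (Fin L) ℝ) + tau3 • allOnes L)⁻¹ -
           C2 • ((lam4 - tau4) • (1 : Matrix (Fin L) (Fin L) ℝ) + tau4 • allOnes L)⁻¹)⁻¹ *
          Matrix.diagonal σ)) l l =
      (I * T / N * (σ l) ^ 2 / (C1 * (lam4 - tau4) - C2 * (lam3 - tau3))) *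
        ((C1 * lam3 * (lam4 - tau4) * (lam4 + ((L : ℝ) - 1) * tau4) -
          C2 * lam4 * (lam3 - tau3) * (lam3 + ((L : ℝ) - 1) * tau3)) /
         (C1 * (lam4 + ((L : ℝ) - 1) * tau4) - C2 * (lam3 + ((L : ℝ) - 1) * tau3))) := by
  simp only [← compoundSymmetric.eq_1]
  have hs3 : lam3 - tau3 + L * tau3 ≠ 0 := by convert h3 using 1; ring
  have hs4 : lam4 - tau4 + L * tau4 ≠ 0 := by convert h4 using 1; ring
  obtain ⟨hunit, hdiag⟩ :=
    isUnit_and_inv_apply_self_smul_inv_sub_smul_inv_compoundSymmetric h1 hs3 h2 hs4 h5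
      (by convert h6 using 1; ring)
  refine ⟨isUnit_compoundSymmetric h1 hs3, isUnit_compoundSymmetric h2 hs4, hunit, fun l => ?_⟩
  rw [Matrix.smul_apply, diagonal_mul_mul_diagonal_apply_self, hdiag, smul_eq_mul, div_mul_div_comm]
  ring

/-- analytical form of Theorem 3, closed-cohort design: under common ICC values across endpoints,
the covariance matrix Ω of the treatment effect estimators is well defined (all matrices
being inverted are invertible) and its l-th diagonal entry has the stated closed form. -/
theorem diag_entry_common_icc_closed_cohort
    (L : ℕ) (hL : 1 ≤ L) (I T N : ℝ) (hI : 0 < I) (hT : 0 < T) (hN : 0 < N)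
    (σ : Fin L → ℝ) (hσ : ∀ l, 0 < σ l)
    (lam3 lam4 tau3 tau4 C1 C2 : ℝ)
    (h1 : lam3 - tau3 ≠ 0) (h2 : lam4 - tau4 ≠ 0)
    (h3 : lam3 + ((L : ℝ) - 1) * tau3 ≠ 0) (h4 : lam4 + ((L : ℝ) - 1) * tau4 ≠ 0)
    (h5 : C1 * (lam4 - tau4) - C2 * (lam3 - tau3) ≠ 0)
    (h6 : C1 * (lam4 + ((L : ℝ) - 1) * tau4) - C2 * (lam3 + ((L : ℝ) - 1) * tau3) ≠ 0) :
    IsUnit ((lam3 - tau3) • (1 : Matrix (Fin L) (Fin L) ℝ) + tau3 • allOnes L) ∧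
    IsUnit ((lam4 - tau4) • (1 : Matrix (Fin L) (Fin L) ℝ) + tau4 • allOnes L) ∧
    IsUnit (C1 • ((lam3 - tau3) • (1 : Matrix (Fin L) (Fin L) ℝ) + tau3 • allOnes L)⁻¹ -
            C2 • ((lam4 - tau4) • (1 : Matrix (Fin L) (Fin L) ℝ) + tau4 • allOnes L)⁻¹) ∧
    ∀ l : Fin L,
      ((I * T / N) •
        (Matrix.diagonal σ *
          (C1 • ((lam3 - tau3) • (1 : Matrix (Fin L) (Fin L) ℝ) + tau3 • allOnes L)⁻¹ -
           C2 • ((lam4 - tau4) • (1 : Matrix (Fin L) (Fin L) ℝ) + tau4 • allOnes L)⁻¹)⁻¹ *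
          Matrix.diagonal σ)) l l =
      (I * T / N * (σ l) ^ 2 / (C1 * (lam4 - tau4) - C2 * (lam3 - tau3))) *
        ((C1 * lam3 * (lam4 - tau4) * (lam4 + ((L : ℝ) - 1) * tau4) -
          C2 * lam4 * (lam3 - tau3) * (lam3 + ((L : ℝ) - 1) * tau3)) /
         (C1 * (lam4 + ((L : ℝ) - 1) * tau4) - C2 * (lam3 + ((L : ℝ) - 1) * tau3))) :=
  diag_entry_common_icc_closed_cohort_general L I T N σ lam3 lam4 tau3 tau4 C1 C2 h1 h2 h3 h4 h5 h6
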